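/- For every α, β ∈ {−1, 1}, every bijection f of the 13-point set C_{α,β} onto itself with the property that a triple of points is collinear if and only if its image triple is collinear satisfies f({V₁, V₂, V₃}) = {V₁, V₂, V₃} (the configuration is stable). -/

import Mathlib

noncomputable section

/-- The real projective plane `ℙ²(ℝ)`. -/
abbrev ProjPlaneR := Projectivization ℝ (Fin 3 → ℝ)

/-- A vector `![a,b,c]` with a nonzero coordinate is nonzero. -/
theorem vne (a b c : ℝ) (i : Fin 3) (h : ![a, b, c] i ≠ 0) : ![a, b, c] ≠ 0 :=
  fun he => h (by rw [he]; simp)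

/-- The point `(a : b : c)` of `ℙ²(ℝ)`. -/
def mkP (a b c : ℝ) (h : ![a, b, c] ≠ 0) : ProjPlaneR :=
  Projectivization.mk ℝ ![a, b, c] h

/-- A set of points of `ℙ²(ℝ)` lies on a common projective line iff some nonzero
linear form vanishes on (representatives of) all of them. -/
def ProjCollinear (s : Set ProjPlaneR) : Prop :=
  ∃ f : (Fin 3 → ℝ) →ₗ[ℝ] ℝ, f ≠ 0 ∧ ∀ p ∈ s, f p.rep = 0

/-! The points of the configuration `C_{α,β}`. -/

def V₁ : ProjPlaneR := mkP 0 1 0 (vne _ _ _ 1 (by norm_num))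
def V₂ : ProjPlaneR := mkP 1 0 0 (vne _ _ _ 0 (by norm_num))
def V₃ : ProjPlaneR := mkP 0 0 1 (vne _ _ _ 2 (by simp))
def S₁ : ProjPlaneR := mkP 1 1 1 (vne _ _ _ 0 (by norm_num))
def S₂ : ProjPlaneR := mkP 4 4 1 (vne _ _ _ 0 (by norm_num))
def S₃ : ProjPlaneR := mkP (-1) 8 2 (vne _ _ _ 0 (by norm_num))
def S₄ : ProjPlaneR := mkP 8 (-1) 2 (vne _ _ _ 0 (by norm_num))
def S₅ (α : ℝ) : ProjPlaneR := mkP (-1) 8 (4 * α) (vne _ _ _ 0 (by norm_num))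
def S₆ (α : ℝ) : ProjPlaneR := mkP (-1) (4 * α) 2 (vne _ _ _ 0 (by norm_num))
def S₇ (α : ℝ) : ProjPlaneR := mkP (-α) 4 4 (vne _ _ _ 1 (by norm_num))
def S₈ (β : ℝ) : ProjPlaneR := mkP 8 (-1) (4 * β) (vne _ _ _ 0 (by norm_num))
def S₉ (β : ℝ) : ProjPlaneR := mkP (4 * β) (-1) 2 (vne _ _ _ 1 (by norm_num))
def S₁₀ (β : ℝ) : ProjPlaneR := mkP 4 (-β) 4 (vne _ _ _ 0 (by norm_num))

/-- The configuration `C_{α,β}` as a set of 13 points of `ℙ²(ℝ)`. -/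
def Cconf (α β : ℝ) : Set ProjPlaneR :=
  {V₁, V₂, V₃, S₁, S₂, S₃, S₄, S₅ α, S₆ α, S₇ α, S₈ β, S₉ β, S₁₀ β}

/-!
A bijection of the configuration preserving collinearity in both directions preserves, for every
point `p`, the number of ordered pairs `(q, r)` of configuration points with `{p, q, r}` collinear.
Collinearity of three points is the vanishing of the triple product of their coordinate vectors;
for `α, β = ±1` these vectors are integral, so the counts are a finite computation over `ℤ`,
which shows that `V₁, V₂, V₃` are exactly the points where the count is maximal.
-/

open Matrix Projectivization Finset

theorem map_mk_rep_eq_zero_iff (φ : (Fin 3 → ℝ) →ₗ[ℝ] ℝ) {u : Fin 3 → ℝ} (hu : u ≠ 0) :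
    φ (mk ℝ u hu).rep = 0 ↔ φ u = 0 := by
  obtain ⟨a, ha⟩ := exists_smul_eq_mk_rep ℝ u hu
  rw [← ha, Units.smul_def, map_smul, smul_eq_zero, or_iff_right a.ne_zero]

theorem projCollinear_mk_iff {u v w : Fin 3 → ℝ} (hu : u ≠ 0) (hv : v ≠ 0) (hw : w ≠ 0) :
    ProjCollinear {mk ℝ u hu, mk ℝ v hv, mk ℝ w hw} ↔ u ⬝ᵥ v ⨯₃ w = 0 := by
  simp only [ProjCollinear, Set.forall_mem_insert, Set.mem_singleton_iff, forall_eq,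
    map_mk_rep_eq_zero_iff]
  rw [triple_product_eq_det]
  refine Iff.trans ?_ exists_mulVec_eq_zero_iff
  rw [← (dotProductEquiv ℝ (Fin 3)).exists_congr_right]
  simp [funext_iff, Fin.forall_fin_succ, mulVec, dotProduct_comm]

theorem projCollinear_pair (p q : ProjPlaneR) : ProjCollinear {p, q} := by
  have h := (projCollinear_mk_iff p.rep_nonzero q.rep_nonzero p.rep_nonzero).2
    (dot_cross_self _ _)
  rwa [mk_rep, mk_rep, Set.pair_comm q p, Set.insert_eq_of_mem (by simp)] at h

theorem RingHom.map_cross {R S : Type*} [CommRing R] [CommRing S] (f : R →+* S)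
    (v w : Fin 3 → R) : f ∘ (v ⨯₃ w) = (f ∘ v) ⨯₃ (f ∘ w) := by
  ext i
  fin_cases i <;> simp [cross_apply]

section TripleDegree

variable {ι : Type*} [Fintype ι]

def tripleDegree (R : ι → ι → ι → Prop) [∀ i j k, Decidable (R i j k)] (i : ι) : ℕ :=
  #{p : ι × ι | R i p.1 p.2}

variable {R : ι → ι → ι → Prop} [∀ i j k, Decidable (R i j k)] {σ : ι → ι}

theorem tripleDegree_le_of_injective (hσ : Function.Injective σ)
    (hR : ∀ i j k, R i j k → R (σ i) (σ j) (σ k)) (i : ι) :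
    tripleDegree R i ≤ tripleDegree R (σ i) :=
  Finset.card_le_card_of_injOn (Prod.map σ σ)
    (fun p hp => by simpa using hR i p.1 p.2 (by simpa using hp))
    (hσ.prodMap hσ).injOn

theorem image_setOf_le_tripleDegree (hσ : Function.Injective σ)
    (hR : ∀ i j k, R i j k → R (σ i) (σ j) (σ k)) (m : ℕ) :
    σ '' {i | m ≤ tripleDegree R i} = {i | m ≤ tripleDegree R i} :=
  ((Set.toFinite _).injOn_iff_bijOn_of_mapsTo
    fun i (hi : m ≤ _) => hi.trans (tripleDegree_le_of_injective hσ hR i)).1 hσ.injOn |>.image_eq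

end TripleDegree

theorem exists_injective_lift_of_injOn_range {ι α : Type*} {P : ι → α} (hP : Function.Injective P)
    {f : α → α} (hmaps : Set.MapsTo f (Set.range P) (Set.range P))
    (hinj : Set.InjOn f (Set.range P)) :
    ∃ σ : ι → ι, Function.Injective σ ∧ ∀ i, f (P i) = P (σ i) := by
  choose σ hσ using fun i => hmaps (Set.mem_range_self i)
  refine ⟨σ, fun i j h => hP (hinj (Set.mem_range_self i) (Set.mem_range_self j) ?_), ?_⟩
  · rw [← hσ i, ← hσ j, h]
  · exact fun i => (hσ i).symm

def configVec {R : Type*} [CommRing R] (a b : R) : Fin 13 → Fin 3 → R :=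
  ![![0, 1, 0], ![1, 0, 0], ![0, 0, 1], ![1, 1, 1], ![4, 4, 1], ![-1, 8, 2], ![8, -1, 2],
    ![-1, 8, 4 * a], ![-1, 4 * a, 2], ![-a, 4, 4], ![8, -1, 4 * b], ![4 * b, -1, 2], ![4, -b, 4]]

theorem RingHom.comp_configVec {R S : Type*} [CommRing R] [CommRing S] (f : R →+* S)
    (a b : R) (i : Fin 13) : f ∘ configVec a b i = configVec (f a) (f b) i := by
  ext t
  fin_cases i <;> fin_cases t <;> simp [configVec, map_ofNat]

def configPoint (α β : ℝ) : Fin 13 → ProjPlaneR :=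
  ![V₁, V₂, V₃, S₁, S₂, S₃, S₄, S₅ α, S₆ α, S₇ α, S₈ β, S₉ β, S₁₀ β]

theorem Cconf_eq_range (α β : ℝ) : Cconf α β = Set.range (configPoint α β) := by
  simp only [configPoint, Matrix.range_cons, Matrix.range_empty, Set.union_empty,
    Set.singleton_union, Cconf]

theorem exists_configPoint_eq_mk (α β : ℝ) (i : Fin 13) :
    ∃ h, configPoint α β i = mk ℝ (configVec α β i) h := by
  fin_cases i <;> exact ⟨_, rfl⟩

def ConfigCollinear (a b : ℤ) (i j k : Fin 13) : Prop :=
  configVec a b i ⬝ᵥ configVec a b j ⨯₃ configVec a b k = 0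

instance (a b : ℤ) (i j k : Fin 13) : Decidable (ConfigCollinear a b i j k) :=
  inferInstanceAs (Decidable (_ = _))

theorem projCollinear_configPoint_iff (a b : ℤ) (i j k : Fin 13) :
    ProjCollinear {configPoint a b i, configPoint a b j, configPoint a b k} ↔
      ConfigCollinear a b i j k := by
  obtain ⟨hi, ei⟩ := exists_configPoint_eq_mk a b i
  obtain ⟨hj, ej⟩ := exists_configPoint_eq_mk a b j
  obtain ⟨hk, ek⟩ := exists_configPoint_eq_mk a b k
  have hcast : ∀ n : ℤ, (n : ℝ) = Int.castRingHom ℝ n := fun _ => rfl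
  rw [ei, ej, ek, projCollinear_mk_iff, ConfigCollinear, hcast a, hcast b,
    ← (Int.castRingHom ℝ).comp_configVec, ← (Int.castRingHom ℝ).comp_configVec,
    ← (Int.castRingHom ℝ).comp_configVec, ← RingHom.map_cross, ← RingHom.map_dotProduct,
    eq_intCast, Int.cast_eq_zero]

theorem configCollinear_separates : ∀ a ∈ ({1, -1} : Finset ℤ), ∀ b ∈ ({1, -1} : Finset ℤ),
    ∀ i j : Fin 13, i ≠ j → ∃ k, ¬ ConfigCollinear a b i j k := by
  decide

theorem tripleDegree_configCollinear_le_iff :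
    ∀ a ∈ ({1, -1} : Finset ℤ), ∀ b ∈ ({1, -1} : Finset ℤ), ∀ i : Fin 13,
      tripleDegree (ConfigCollinear a b) 0 ≤ tripleDegree (ConfigCollinear a b) i ↔
        i = 0 ∨ i = 1 ∨ i = 2 := by
  decide

theorem configPoint_injective {a b : ℤ} (ha : a ∈ ({1, -1} : Finset ℤ))
    (hb : b ∈ ({1, -1} : Finset ℤ)) : Function.Injective (configPoint a b) := by
  intro i j hij
  by_contra hne
  obtain ⟨k, hk⟩ := configCollinear_separates a ha b hb i j hne
  apply hk
  rw [← projCollinear_configPoint_iff, hij, Set.insert_eq_of_mem (Set.mem_insert _ _)]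
  exact projCollinear_pair _ _

/--
For `α, β ∈ {−1,1}`, every bijection of the 13-point set `C_{α,β}` onto
itself that preserves collinearity of triples (in both directions) globally fixes the
set of vertices `{V₁, V₂, V₃}`: the configuration is stable.
-/
theorem stmt_2 (α β : ℝ) (hα : α = 1 ∨ α = -1) (hβ : β = 1 ∨ β = -1)
    (f : ProjPlaneR → ProjPlaneR)
    (hbij : Set.BijOn f (Cconf α β) (Cconf α β))
    (hcol : ∀ p ∈ Cconf α β, ∀ q ∈ Cconf α β, ∀ r ∈ Cconf α β,
      (ProjCollinear {p, q, r} ↔ ProjCollinear {f p, f q, f r})) :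
    f '' ({V₁, V₂, V₃} : Set ProjPlaneR) = {V₁, V₂, V₃} := by
  have sign_cast : ∀ x : ℝ, x = 1 ∨ x = -1 → ∃ n ∈ ({1, -1} : Finset ℤ), (n : ℝ) = x := by
    rintro x (rfl | rfl)
    exacts [⟨1, by simp⟩, ⟨-1, by simp⟩]
  obtain ⟨a, ha, rfl⟩ := sign_cast α hα
  obtain ⟨b, hb, rfl⟩ := sign_cast β hβ
  rw [Cconf_eq_range] at hbij hcol
  obtain ⟨σ, hσ, hfσ⟩ :=
    exists_injective_lift_of_injOn_range (configPoint_injective ha hb) hbij.mapsTo hbij.injOn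
  have hR : ∀ i j k, ConfigCollinear a b i j k → ConfigCollinear a b (σ i) (σ j) (σ k) := by
    intro i j k h
    rw [← projCollinear_configPoint_iff] at h ⊢
    simpa only [hfσ] using
      (hcol _ (Set.mem_range_self i) _ (Set.mem_range_self j) _ (Set.mem_range_self k)).1 h
  have hV : ({V₁, V₂, V₃} : Set ProjPlaneR) = configPoint a b ''
      {i | tripleDegree (ConfigCollinear a b) 0 ≤ tripleDegree (ConfigCollinear a b) i} := by
    simp only [tripleDegree_configCollinear_le_iff a ha b hb, Set.ofPred_or,
      Set.ofPred_eq_eq_singleton, Set.singleton_union, Set.image_insert_eq, Set.image_singleton]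
    rfl
  rw [hV, Set.image_image]
  simp only [hfσ]
  rw [← Set.image_image, image_setOf_le_tripleDegree hσ hR]

end
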